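/- arXiv:2108.07047 — 2 statements merged into one kernel-verified Lean document; each statement's English description precedes it below -/
import Mathlib

section
/- If Δ_i(v,g) = 0 for all networks g with i ∈ N(g), then removing player i from the probability distribution does not change expected wealth: 𝔼(v, ρ^{-i}) = 𝔼(v,ρ). Similarly, if Δ_{ij}(v,g) = 0 for all g with ij ∉ g, then 𝔼(v, ρ^{-ij}) = 𝔼(v,ρ). -/
open scoped Classical BigOperators

noncomputable section

/-- A link is an unordered pair of two distinct players. -/
abbrev Link (N : Type) [DecidableEq N] := {e : Sym2 N // ¬ e.IsDiag}

/-- A network is a set of links. -/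
abbrev Network (N : Type) [Fintype N] [DecidableEq N] := Finset (Link N)

variable {N : Type} [Fintype N] [DecidableEq N]

/-- The link between two distinct players. -/
def mkLink (i j : N) (h : i ≠ j) : Link N :=
  ⟨s(i, j), by simp only [Sym2.mk_isDiag_iff]; exact h⟩

/-- ρ is a network formation probability distribution. -/
def IsDist (ρ : Network N → ℝ) : Prop :=
  (∀ g, 0 ≤ ρ g) ∧ ∑ g : Network N, ρ g = 1

/-- Restriction of a network formation probability distribution to a network `g`. -/
def restrictDist (ρ : Network N → ℝ) (g : Network N) : Network N → ℝ :=
  fun h => if h ⊆ g then ∑ h' ∈ gᶜ.powerset, ρ (h ∪ h') else 0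

/-- The links of player `i` in network `g`. -/
def playerLinks (i : N) (g : Network N) : Network N :=
  g.filter (fun e => i ∈ (e : Sym2 N))

/-- ρ^{-ij} : removal of the link `e` from the distribution ρ. -/
def linkRemove (ρ : Network N → ℝ) (e : Link N) : Network N → ℝ :=
  restrictDist ρ {e}ᶜ

/-- ρ^{-i} : removal of the player `i` from the distribution ρ. -/
def playerRemove (ρ : Network N → ℝ) (i : N) : Network N → ℝ :=
  restrictDist ρ (playerLinks i Finset.univ)ᶜ

/-- The extent g(ρ) of ρ : the union of all networks with positive probability. -/
def extent (ρ : Network N → ℝ) : Network N :=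
  Finset.univ.filter (fun e => ∃ g : Network N, 0 < ρ g ∧ e ∈ g)

/-- The set N(g) of non-isolated players of a network. -/
def players (g : Network N) : Finset N :=
  Finset.univ.filter (fun i => ∃ e ∈ g, i ∈ (e : Sym2 N))

/-- The simple graph associated with a network. -/
def toGraph (g : Network N) : SimpleGraph N where
  Adj i j := ∃ e ∈ g, (e : Sym2 N) = s(i, j)
  symm := by
    constructor
    rintro i j ⟨e, he, h2⟩
    exact ⟨e, he, by rw [h2, Sym2.eq_swap]⟩
  loopless := by
    constructor
    rintro i ⟨e, he, h2⟩
    exact e.2 (by rw [h2]; exact Sym2.mk_isDiag_iff.mpr rfl)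

/-- Two links lie in the same component of `g`. -/
def sameComp (g : Network N) (e e' : Link N) : Prop :=
  ∃ i ∈ (e : Sym2 N), ∃ j ∈ (e' : Sym2 N), (toGraph g).Reachable i j

/-- The component of `g` containing the link `e`. -/
def linkComponent (g : Network N) (e : Link N) : Network N :=
  g.filter (fun e' => sameComp g e e')

/-- The set C(g) of components of the network `g`. -/
def components (g : Network N) : Finset (Network N) :=
  g.image (linkComponent g)

/-- A network game `v` is component additive. -/
def CompAdditive (v : Network N → ℝ) : Prop :=
  ∀ g : Network N, v g = ∑ h ∈ components g, v h

/-- Expected wealth 𝔼(v,ρ) of a variable network game. -/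
def expWealth (v ρ : Network N → ℝ) : ℝ :=
  ∑ g : Network N, ρ g * v g

/-- The Shapley value of a cooperative game. -/
def shapley (ω : Finset N → ℝ) (i : N) : ℝ :=
  ∑ S ∈ (Finset.univ.erase i).powerset,
    ((S.card.factorial * (Fintype.card N - S.card - 1).factorial : ℝ) /
      (Fintype.card N).factorial) * (ω (insert i S) - ω S)

/-- The restriction g|S of a network to the coalition S. -/
def netRestrict (g : Network N) (S : Finset N) : Network N :=
  g.filter (fun e => ∀ j ∈ (e : Sym2 N), j ∈ S)

/-- The Myerson Value of a network game. -/
def myerson (v : Network N → ℝ) (g : Network N) (i : N) : ℝ :=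
  shapley (fun S => v (netRestrict g S)) i

/-- The Expected Myerson Value of a variable network game. -/
def expectedMyerson (v ρ : Network N → ℝ) (i : N) : ℝ :=
  ∑ g : Network N, ρ g * myerson v g i

/-- The cooperative game ω_{(v,ρ)} associated with a variable network game. -/
def coopGame (v ρ : Network N → ℝ) (S : Finset N) : ℝ :=
  ∑ g : Network N, ρ g * v (netRestrict g S)

/- `restrictDist ρ g` is the law of `k ∩ g` when `k` has law `ρ`: a network `k` splits uniquely
into `k ∩ g ⊆ g` and `k \ g ⊆ gᶜ`, and the inner sum of `restrictDist` runs over the second part. -/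
theorem expWealth_restrictDist (v ρ : Network N → ℝ) (g : Network N) :
    expWealth v (restrictDist ρ g) = ∑ k : Network N, ρ k * v (k ∩ g) := by
  have hsplit : ∀ s t : Network N, s ⊆ g → t ⊆ gᶜ → (s ∪ t) ∩ g = s ∧ (s ∪ t) \ g = t := by
    intro s t hs ht
    have hdisj : Disjoint t g := Finset.subset_compl_iff_disjoint_right.mp ht
    refine ⟨?_, ?_⟩
    · rw [Finset.union_inter_distrib_right, Finset.inter_eq_left.mpr hs,
        Finset.disjoint_iff_inter_eq_empty.mp hdisj, Finset.union_empty]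
    · rw [Finset.union_sdiff_distrib, Finset.sdiff_eq_empty_iff_subset.mpr hs,
        Finset.sdiff_eq_self_of_disjoint hdisj, Finset.empty_union]
  simp only [expWealth, restrictDist, ite_mul, zero_mul, ← Finset.sum_filter, Finset.sum_mul]
  rw [show Finset.univ.filter (· ⊆ g) = g.powerset by ext; simp, ← Finset.sum_product']
  refine Finset.sum_nbij' (fun p => p.1 ∪ p.2) (fun k => (k ∩ g, k \ g)) ?_ ?_ ?_ ?_ ?_
  · simp
  · simp [Finset.subset_iff]
  · intro p hp
    simp only [Finset.mem_product, Finset.mem_powerset] at hp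
    obtain ⟨h1, h2⟩ := hsplit p.1 p.2 hp.1 hp.2
    exact Prod.ext h1 h2
  · intro k _
    exact sup_inf_sdiff k g
  · intro p hp
    simp only [Finset.mem_product, Finset.mem_powerset] at hp
    rw [(hsplit p.1 p.2 hp.1 hp.2).1]

theorem expWealth_restrictDist_eq {v : Network N → ℝ} (ρ : Network N → ℝ) {g : Network N}
    (hv : ∀ k, v (k ∩ g) = v k) : expWealth v (restrictDist ρ g) = expWealth v ρ := by
  rw [expWealth_restrictDist]
  simp only [hv, expWealth]

theorem sdiff_playerLinks_of_notMem_players {i : N} {k : Network N} (hi : i ∉ players k) :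
    k \ playerLinks i Finset.univ = k := by
  refine Finset.sdiff_eq_self_of_disjoint (Finset.disjoint_left.mpr fun e he hei => hi ?_)
  simp only [playerLinks, Finset.mem_filter] at hei
  simp only [players, Finset.mem_filter, Finset.mem_univ, true_and]
  exact ⟨e, he, hei.2⟩

theorem expWealth_null_general (v ρ : Network N → ℝ)
    (i : N) (e : Link N) :
    ((∀ g : Network N, i ∈ players g → v g - v (g \ playerLinks i Finset.univ) = 0) →
      expWealth v (playerRemove ρ i) = expWealth v ρ) ∧
    ((∀ g : Network N, e ∉ g → v (insert e g) - v g = 0) →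
      expWealth v (linkRemove ρ e) = expWealth v ρ) := by
  refine ⟨fun hnull => expWealth_restrictDist_eq ρ fun k => ?_,
    fun hsuperfluous => expWealth_restrictDist_eq ρ fun k => ?_⟩
  · rw [← Finset.sdiff_eq_inter_compl]
    by_cases hik : i ∈ players k
    · linarith [hnull k hik]
    · rw [sdiff_playerLinks_of_notMem_players hik]
  · rw [← Finset.sdiff_eq_inter_compl, Finset.sdiff_singleton_eq_erase]
    by_cases hek : e ∈ k
    · have := hsuperfluous (k.erase e) (Finset.notMem_erase e k)
      rw [Finset.insert_erase hek] at this
      linarith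
    · rw [Finset.erase_eq_of_notMem hek]

/-- null players and superfluous links do not affect expected wealth. -/
theorem expWealth_null (v ρ : Network N → ℝ) (hv : v ∅ = 0) (hρ : IsDist ρ)
    (i : N) (e : Link N) :
    ((∀ g : Network N, i ∈ players g → v g - v (g \ playerLinks i Finset.univ) = 0) →
      expWealth v (playerRemove ρ i) = expWealth v ρ) ∧
    ((∀ g : Network N, e ∉ g → v (insert e g) - v g = 0) →
      expWealth v (linkRemove ρ e) = expWealth v ρ) :=
  expWealth_null_general v ρ i e
end
end

section
/- Let Y be a component balanced allocation rule on network games (for every component additive v, network g, and component h ∈ C(g): Σ_{i ∈ N(h)} Y_i(v,g) = v(h)). Then its standard extension Ψ^Y is component balanced on variable network games: for every component additive v, every ρ, and every component h ∈ C(g(ρ)) of the extent, Σ_{i ∈ N(h)} Ψ^Y_i(v,ρ) = Σ_g ρ(g)·v(g ∩ h). -/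
open scoped Classical BigOperators

noncomputable section

variable {N : Type} [Fintype N] [DecidableEq N]

/-!
A network `g` with positive probability lies inside the extent `K = g(ρ)`, so a component `h`
of `K` cuts `g` along whole components: every component of `g ∩ h` is a component of `g`, and
`g ∩ h` consists of exactly those components of `g` that touch `N(h)`. Component balance of `Y`
at `g` therefore gives `∑_{i ∈ N(h)} Y_i(v, g) = ∑_{c ∈ C(g ∩ h)} v(c) = v(g ∩ h)`, the players
of `N(h)` outside `N(g)` contributing nothing. Averaging over `ρ` yields the theorem.
-/

section Components

variable {g g' K h : Network N} {e f f' : Link N}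

@[simp]
lemma mem_players {i : N} : i ∈ players g ↔ ∃ e ∈ g, i ∈ (e : Sym2 N) := by
  simp [players]

lemma players_mono (hgg' : g ⊆ g') : players g ⊆ players g' := by
  intro i hi
  obtain ⟨e, he, hie⟩ := mem_players.mp hi
  exact mem_players.mpr ⟨e, hgg' he, hie⟩

lemma toGraph_mono (hgg' : g ⊆ g') : toGraph g ≤ toGraph g' := by
  rintro i j ⟨e, he, hij⟩
  exact ⟨e, hgg' he, hij⟩

lemma toGraph_adj_of_mem {i j : N} (he : e ∈ g) (hi : i ∈ (e : Sym2 N)) (hj : j ∈ (e : Sym2 N))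
    (hij : i ≠ j) : (toGraph g).Adj i j :=
  ⟨e, he, (Sym2.mem_and_mem_iff hij).mp ⟨hi, hj⟩⟩

lemma toGraph_reachable_of_mem {i j : N} (he : e ∈ g) (hi : i ∈ (e : Sym2 N))
    (hj : j ∈ (e : Sym2 N)) : (toGraph g).Reachable i j := by
  by_cases hij : i = j
  · exact hij ▸ SimpleGraph.Reachable.refl i
  · exact (toGraph_adj_of_mem he hi hj hij).reachable

lemma sameComp_refl (e : Link N) : sameComp g e e :=
  ⟨_, Sym2.out_fst_mem _, _, Sym2.out_fst_mem _, SimpleGraph.Reachable.refl _⟩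

lemma sameComp.symm (hef : sameComp g e f) : sameComp g f e := by
  obtain ⟨i, hi, j, hj, hij⟩ := hef
  exact ⟨j, hj, i, hi, hij.symm⟩

lemma sameComp.trans (hf : f ∈ g) (hef : sameComp g e f) (hff' : sameComp g f f') :
    sameComp g e f' := by
  obtain ⟨i, hi, j, hj, hij⟩ := hef
  obtain ⟨k, hk, l, hl, hkl⟩ := hff'
  exact ⟨i, hi, l, hl, (hij.trans (toGraph_reachable_of_mem hf hj hk)).trans hkl⟩

lemma linkComponent_eq_of_sameComp (he : e ∈ g) (hf : f ∈ g) (hef : sameComp g e f) :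
    linkComponent g e = linkComponent g f := by
  ext e'
  simp only [linkComponent, Finset.mem_filter, and_congr_right_iff]
  exact fun _ => ⟨hef.symm.trans he, hef.trans hf⟩

lemma mem_linkComponent_self (he : e ∈ g) : e ∈ linkComponent g e :=
  Finset.mem_filter.mpr ⟨he, sameComp_refl e⟩

lemma subset_of_mem_components (hh : h ∈ components g) : h ⊆ g := by
  obtain ⟨e, -, rfl⟩ := Finset.mem_image.mp hh
  exact Finset.filter_subset _ _

lemma mem_of_mem_components_of_mem_players (hh : h ∈ components K) (heK : e ∈ K) {i : N}
    (hie : i ∈ (e : Sym2 N)) (hih : i ∈ players h) : e ∈ h := by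
  obtain ⟨e₀, -, rfl⟩ := Finset.mem_image.mp hh
  obtain ⟨f, hf, hif⟩ := mem_players.mp hih
  obtain ⟨hfK, j, hj, k, hk, hjk⟩ := Finset.mem_filter.mp hf
  exact Finset.mem_filter.mpr
    ⟨heK, j, hj, i, hie, hjk.trans (toGraph_reachable_of_mem hfK hk hif)⟩

lemma disjoint_players_of_mem_components {h₁ h₂ : Network N} (hh₁ : h₁ ∈ components g)
    (hh₂ : h₂ ∈ components g) (hne : h₁ ≠ h₂) : Disjoint (players h₁) (players h₂) := by
  refine Finset.disjoint_left.mpr fun i hi₁ hi₂ => hne ?_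
  obtain ⟨e₁, he₁, rfl⟩ := Finset.mem_image.mp hh₁
  obtain ⟨e₂, he₂, rfl⟩ := Finset.mem_image.mp hh₂
  obtain ⟨f₁, hf₁, hif₁⟩ := mem_players.mp hi₁
  obtain ⟨f₂, hf₂, hif₂⟩ := mem_players.mp hi₂
  obtain ⟨hf₁g, he₁f₁⟩ := Finset.mem_filter.mp hf₁
  obtain ⟨hf₂g, he₂f₂⟩ := Finset.mem_filter.mp hf₂
  have hf₁f₂ : sameComp g f₁ f₂ := ⟨i, hif₁, i, hif₂, SimpleGraph.Reachable.refl i⟩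
  exact linkComponent_eq_of_sameComp he₁ he₂ ((he₁f₁.trans hf₁g hf₁f₂).trans hf₂g he₂f₂.symm)

lemma players_eq_biUnion_components (g : Network N) :
    players g = (components g).biUnion players := by
  ext i
  simp only [Finset.mem_biUnion]
  constructor
  · rintro hi
    obtain ⟨e, he, hie⟩ := mem_players.mp hi
    exact ⟨linkComponent g e, Finset.mem_image_of_mem _ he,
      mem_players.mpr ⟨e, mem_linkComponent_self he, hie⟩⟩
  · rintro ⟨c, hc, hic⟩
    exact players_mono (subset_of_mem_components hc) hic

end Components

section InterComponent

variable {g K h : Network N}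

lemma players_inter_component (hgK : g ⊆ K) (hh : h ∈ components K) :
    players (g ∩ h) = players g ∩ players h := by
  ext i
  simp only [Finset.mem_inter]
  constructor
  · intro hi
    exact ⟨players_mono Finset.inter_subset_left hi, players_mono Finset.inter_subset_right hi⟩
  · rintro ⟨hig, hih⟩
    obtain ⟨e, heg, hie⟩ := mem_players.mp hig
    exact mem_players.mpr
      ⟨e, Finset.mem_inter.mpr ⟨heg, mem_of_mem_components_of_mem_players hh (hgK heg) hie hih⟩, hie⟩

/-- A path of `g` leaving `N(h)` would need a link of `K` outside the component `h`. -/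
lemma reachable_inter_component (hgK : g ⊆ K) (hh : h ∈ components K) {i j : N}
    (hij : (toGraph g).Reachable i j) (hi : i ∈ players h) :
    (toGraph (g ∩ h)).Reachable i j ∧ j ∈ players h := by
  obtain ⟨w⟩ := hij
  induction w with
  | nil => exact ⟨SimpleGraph.Reachable.refl _, hi⟩
  | @cons i k j hik _ ih =>
    obtain ⟨e, heg, he⟩ := hik
    have hie : i ∈ (e : Sym2 N) := he ▸ Sym2.mem_mk_left i k
    have hke : k ∈ (e : Sym2 N) := he ▸ Sym2.mem_mk_right i k
    have heh : e ∈ h := mem_of_mem_components_of_mem_players hh (hgK heg) hie hi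
    obtain ⟨hkj, hj⟩ := ih (mem_players.mpr ⟨e, heh, hke⟩)
    have hik : (toGraph (g ∩ h)).Adj i k := ⟨e, Finset.mem_inter.mpr ⟨heg, heh⟩, he⟩
    exact ⟨hik.reachable.trans hkj, hj⟩

lemma linkComponent_inter_component (hgK : g ⊆ K) (hh : h ∈ components K) {f : Link N}
    (hf : f ∈ g ∩ h) : linkComponent (g ∩ h) f = linkComponent g f := by
  obtain ⟨-, hfh⟩ := Finset.mem_inter.mp hf
  ext f'
  simp only [linkComponent, Finset.mem_filter]
  constructor
  · rintro ⟨hf', i, hi, j, hj, hij⟩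
    exact ⟨(Finset.mem_inter.mp hf').1, i, hi, j, hj,
      hij.mono (toGraph_mono Finset.inter_subset_left)⟩
  · rintro ⟨hf'g, i, hi, j, hj, hij⟩
    obtain ⟨hij', hjh⟩ := reachable_inter_component hgK hh hij (mem_players.mpr ⟨f, hfh, hi⟩)
    exact ⟨Finset.mem_inter.mpr
      ⟨hf'g, mem_of_mem_components_of_mem_players hh (hgK hf'g) hj hjh⟩, i, hi, j, hj, hij'⟩

lemma components_inter_component_subset (hgK : g ⊆ K) (hh : h ∈ components K) :
    components (g ∩ h) ⊆ components g := by
  intro c hc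
  obtain ⟨f, hf, rfl⟩ := Finset.mem_image.mp hc
  rw [linkComponent_inter_component hgK hh hf]
  exact Finset.mem_image_of_mem _ (Finset.mem_inter.mp hf).1

lemma sum_players_component_eq_inter {v : Network N → ℝ} (hv : CompAdditive v) {y : N → ℝ}
    (hy : ∀ c ∈ components g, ∑ i ∈ players c, y i = v c) (hy0 : ∀ i ∉ players g, y i = 0)
    (hgK : g ⊆ K) (hh : h ∈ components K) :
    ∑ i ∈ players h, y i = v (g ∩ h) := by
  have hdisj : (components (g ∩ h) : Set (Network N)).PairwiseDisjoint players :=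
    fun _ hc₁ _ hc₂ hne => disjoint_players_of_mem_components hc₁ hc₂ hne
  calc ∑ i ∈ players h, y i = ∑ i ∈ players g ∩ players h, y i := by
        refine (Finset.sum_subset Finset.inter_subset_right fun i hih hi => ?_).symm
        exact hy0 i fun hig => hi (Finset.mem_inter.mpr ⟨hig, hih⟩)
    _ = ∑ c ∈ components (g ∩ h), ∑ i ∈ players c, y i := by
        rw [← players_inter_component hgK hh, players_eq_biUnion_components,
          Finset.sum_biUnion hdisj]
    _ = v (g ∩ h) := by
        rw [hv (g ∩ h)]
        exact Finset.sum_congr rfl fun c hc => hy c (components_inter_component_subset hgK hh hc)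

end InterComponent

lemma subset_extent {ρ : Network N → ℝ} {g : Network N} (hg : 0 < ρ g) : g ⊆ extent ρ :=
  fun e he => Finset.mem_filter.mpr ⟨Finset.mem_univ e, g, hg, he⟩

/-- the standard extension of a component balanced allocation rule is
component balanced. -/
theorem standardExtension_componentBalanced (Y : (Network N → ℝ) → Network N → N → ℝ)
    (hY : ∀ v : Network N → ℝ, CompAdditive v → ∀ g : Network N,
      ∀ h ∈ components g, ∑ i ∈ players h, Y v g i = v h)
    (hY0 : ∀ (v : Network N → ℝ) (g : Network N) (i : N), i ∉ players g → Y v g i = 0)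
    (v ρ : Network N → ℝ) (hv : CompAdditive v) (hρ : IsDist ρ)
    (h : Network N) (hh : h ∈ components (extent ρ)) :
    ∑ i ∈ players h, (∑ g : Network N, ρ g * Y v g i) =
      ∑ g : Network N, ρ g * v (g ∩ h) := by
  rw [Finset.sum_comm]
  refine Finset.sum_congr rfl fun g _ => ?_
  rw [← Finset.mul_sum]
  rcases (hρ.1 g).eq_or_lt with hg | hg
  · simp [← hg]
  · rw [sum_players_component_eq_inter hv (hY v hv g) (hY0 v g) (subset_extent hg) hh]
end
end
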